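/- Let (A, (f,g)) be a dibaric algebra. Then ann A ⊆ J_f^⊥, i.e., every element y with yx = 0 for all x ∈ A satisfies F(y) = 0 for every f-invariant linear form F. -/

import Mathlib

/-! Evaluating the defining identities at a product `y x` with `y ∈ ann A` gives
`f y * g x + f x * g y = 0` and `f y * F x + f x * F y = 0` for every `x`. Putting `x = y` in the
first shows `f y * g y = 0`; if `f y ≠ 0` then `g y = 0` and `f y • g = 0`, contradicting `g ≠ 0`.
So `f y = 0`, and the second identity becomes `f x * F y = 0`, whence `F y = 0` since `f ≠ 0`. -/

section

variable {K M : Type*} [Field K] [AddCommGroup M] [Module K M]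

theorem forall_mul_add_mul_eq_zero_of_forall_mul_eq_zero {p q r : M →ₗ[K] K} [NeZero (2 : K)]
    {mul : M →ₗ[K] M →ₗ[K] M} {y : M} (hy : ∀ x, mul y x = 0)
    (h : ∀ x, r (mul y x) = (p y * q x + p x * q y) / 2) (x : M) :
    p y * q x + p x * q y = 0 := by
  have hx := h x
  rw [hy x, map_zero, eq_comm, div_eq_zero_iff] at hx
  exact hx.resolve_right two_ne_zero

theorem LinearMap.apply_eq_zero_of_forall_mul_add_mul_eq_zero [NeZero (2 : K)]
    {p q : M →ₗ[K] K} (hq : q ≠ 0) {y : M} (h : ∀ x, p y * q x + p x * q y = 0) :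
    p y = 0 := by
  by_contra hpy
  have hqy : q y = 0 := by
    have hyy : (2 : K) * p y * q y = 0 := by linear_combination h y
    simpa [two_ne_zero, hpy] using hyy
  exact hq <| LinearMap.ext fun x => by simpa [hqy, hpy] using h x

theorem LinearMap.apply_eq_zero_of_forall_mul_add_mul_eq_zero_of_apply_eq_zero
    {p q : M →ₗ[K] K} (hp : p ≠ 0) {y : M} (hpy : p y = 0)
    (h : ∀ x, p y * q x + p x * q y = 0) : q y = 0 := by
  obtain ⟨x, hx⟩ : ∃ x, p x ≠ 0 := by simpa [LinearMap.ext_iff] using hp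
  simpa [hpy, hx] using h x

end

/-- Let (A, (f,g)) be a dibaric algebra. Then ann A ⊆ J_f^⊥ : every element y with yx = 0 for
all x ∈ A satisfies F(y) = 0 for every f-invariant linear form F. -/
theorem stmt_4 (A : Type*) [AddCommGroup A] [Module ℝ A]
    (mul : A →ₗ[ℝ] A →ₗ[ℝ] A)
    (f g : A →ₗ[ℝ] ℝ) (hf : f ≠ 0) (hg : g ≠ 0)
    (hbq : ∀ x y : A, f (mul x y) = (f x * g y + f y * g x) / 2 ∧
                      g (mul x y) = (f x * g y + f y * g x) / 2)
    (y : A) (hy : ∀ x : A, mul y x = 0)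
    (F : A →ₗ[ℝ] ℝ)
    (hF : ∀ a b : A, F (mul a b) = (f a * F b + f b * F a) / 2) :
    F y = 0 := by
  have hfy : f y = 0 := f.apply_eq_zero_of_forall_mul_add_mul_eq_zero hg
    (forall_mul_add_mul_eq_zero_of_forall_mul_eq_zero hy fun x => (hbq y x).1)
  exact f.apply_eq_zero_of_forall_mul_add_mul_eq_zero_of_apply_eq_zero hf hfy
    (forall_mul_add_mul_eq_zero_of_forall_mul_eq_zero hy (hF y))
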